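/- arXiv:math/0602344 — 6 statements merged into one kernel-verified Lean document; each statement's English description precedes it below -/
import Mathlib

section
/- Let k be a field, R = k[x,y,z]/(x² + yz), and let D be the differential R-module R² with differentiation given by the matrix A = [[x, y],[z, −x]]. Then A² = 0 and the homology of D is zero. -/
set_option maxHeartbeats 1000000
set_option synthInstance.maxHeartbeats 1000000

open MvPolynomial in
/-- The square-zero matrix `[[x, y],[z, −x]]` over `R = k[x,y,z]/(x² + yz)`. -/
noncomputable def hyperA (k : Type) [Field k] :
    Matrix (Fin 2) (Fin 2)
      (MvPolynomial (Fin 3) k ⧸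
        Ideal.span {(X 0 : MvPolynomial (Fin 3) k) ^ 2 + X 1 * X 2}) :=
  let mk := Ideal.Quotient.mk
    (Ideal.span {(X 0 : MvPolynomial (Fin 3) k) ^ 2 + X 1 * X 2})
  !![mk (X 0), mk (X 1); mk (X 2), -(mk (X 0))]

open MvPolynomial in
lemma hyper_f_ne_zero (k : Type) [Field k] :
    ((X 0 : MvPolynomial (Fin 3) k) ^ 2 + X 1 * X 2) ≠ 0 := by
  intro h
  have := congrArg (MvPolynomial.eval (fun i : Fin 3 => if i = 0 then (1:k) else 0)) h
  simp at this

open MvPolynomial in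
/-- Over `k[x,y,z]/(x²+yz)` the matrix `A = [[x,y],[z,−x]]` satisfies `A² = 0` and
the resulting differential module `R²` is acyclic. -/
theorem hypersurface_matrix_acyclic (k : Type) [Field k] :
    hyperA k * hyperA k = 0 ∧
    LinearMap.ker (hyperA k).mulVecLin = LinearMap.range (hyperA k).mulVecLin := by
  set f : MvPolynomial (Fin 3) k := (X 0 : MvPolynomial (Fin 3) k) ^ 2 + X 1 * X 2 with hfdef
  set I := Ideal.span {f}
  set mk := Ideal.Quotient.mk I with hmk
  have hmkf : mk f = 0 := Ideal.Quotient.eq_zero_iff_mem.mpr (Ideal.subset_span rfl)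
  have hfne : f ≠ 0 := hyper_f_ne_zero k
  have hsq : hyperA k * hyperA k = 0 := by
    ext i j
    fin_cases i <;> fin_cases j <;>
      simp [hyperA, Matrix.mul_apply, Fin.sum_univ_two]
    · rw [← map_mul, ← map_mul, ← map_add]
      exact Ideal.Quotient.eq_zero_iff_mem.mpr (Ideal.subset_span (by
        rw [Set.mem_singleton_iff]; ring))
    · ring
    · ring
    · have h2 : (Ideal.Quotient.mk (Ideal.span {(X 0 : MvPolynomial (Fin 3) k) ^ 2 + X 1 * X 2}))
          (X 2 * X 1 + X 0 ^ 2) = 0 :=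
        Ideal.Quotient.eq_zero_iff_mem.mpr (Ideal.subset_span (by
          rw [Set.mem_singleton_iff]; ring))
      rw [map_add, map_mul, map_pow] at h2
      linear_combination h2
  refine ⟨hsq, le_antisymm ?_ ?_⟩
  · rintro v hv
    simp only [LinearMap.mem_ker] at hv
    obtain ⟨p, hp⟩ := Ideal.Quotient.mk_surjective (v 0)
    obtain ⟨q, hq⟩ := Ideal.Quotient.mk_surjective (v 1)
    have h0 : mk (X 0 * p + X 1 * q) = 0 := by
      have := congrFun hv 0
      simp [hyperA, Matrix.mulVecLin, Matrix.mulVec, dotProduct,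
        Fin.sum_univ_two] at this
      rw [map_add, map_mul, map_mul, hp, hq]
      linear_combination this
    have h1 : mk (X 2 * p - X 0 * q) = 0 := by
      have := congrFun hv 1
      simp [hyperA, Matrix.mulVecLin, Matrix.mulVec, dotProduct,
        Fin.sum_univ_two] at this
      rw [map_sub, map_mul, map_mul, hp, hq]
      linear_combination this
    obtain ⟨a, ha⟩ := Ideal.mem_span_singleton.mp (Ideal.Quotient.eq_zero_iff_mem.mp h0)
    obtain ⟨b, hb⟩ := Ideal.mem_span_singleton.mp (Ideal.Quotient.eq_zero_iff_mem.mp h1)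
    -- A²ṽ = f ṽ gives  f * p = f * (X0*a + X1*b) and f * q = f * (X2*a - X0*b)
    have hp' : p = X 0 * a + X 1 * b := by
      have key : f * p = f * (X 0 * a + X 1 * b) := by
        have : X 0 * (X 0 * p + X 1 * q) + X 1 * (X 2 * p - X 0 * q) = f * p := by
          rw [hfdef]; ring
        rw [ha, hb] at this
        linear_combination -this
      exact mul_left_cancel₀ hfne key
    have hq' : q = X 2 * a - X 0 * b := by
      have key : f * q = f * (X 2 * a - X 0 * b) := by
        have : X 2 * (X 0 * p + X 1 * q) - X 0 * (X 2 * p - X 0 * q) = f * q := by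
          rw [hfdef]; ring
        rw [ha, hb] at this
        linear_combination -this
      exact mul_left_cancel₀ hfne key
    refine ⟨![mk a, mk b], ?_⟩
    funext i
    fin_cases i <;>
      simp [hyperA, Matrix.mulVecLin, Matrix.mulVec, dotProduct, Fin.sum_univ_two]
    · rw [← hp, hp', map_add, map_mul, map_mul]
    · rw [← hq, hq', map_sub, map_mul, map_mul]; ring
  · rintro v ⟨u, rfl⟩
    simp only [LinearMap.mem_ker, Matrix.mulVecLin_apply, Matrix.mulVec_mulVec]
    rw [hsq]
    simp
end

section
/- Let R be a commutative ring in which every R-module has finite projective dimension (R is 'regular'). If D is a differential R-module with H(D) = 0 whose underlying R-module is projective, then the image of δ^D is a projective R-module. -/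
/-!
The surjection `δ : D → im δ` has kernel `ker δ = im δ`, so `0 → im δ → D → im δ → 0` is exact
with `D` projective. By dimension shifting (Schanuel's lemma), if `im δ` has projective dimension
at most `n + 1` then this syzygy of it, which is `im δ` again, has projective dimension at most
`n`; descending induction brings it down to `0`.
-/

universe u

/-- `pdLE R n M` : the `R`-module `M` has projective dimension at most `n`. -/
def pdLE (R : Type u) [Ring R] : ℕ → ModuleCat.{u} R → Prop
  | 0, M => Module.Projective R M
  | n + 1, M => ∃ (P : ModuleCat.{u} R) (f : P →ₗ[R] M),
      Module.Projective R P ∧ Function.Surjective f ∧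
      pdLE R n (ModuleCat.of R (LinearMap.ker f))

open LinearMap

section DimensionShifting

variable {R : Type u} [Ring R] {M N P Q X : Type u}
  [AddCommGroup M] [Module R M] [AddCommGroup N] [Module R N] [AddCommGroup P] [Module R P]
  [AddCommGroup Q] [Module R Q] [AddCommGroup X] [Module R X]

theorem Function.Exact.nonempty_linearEquiv_prod_of_projective {i : M →ₗ[R] X}
    {s : X →ₗ[R] Q} (h : Function.Exact i s) (hi : Function.Injective i)
    (hs : Function.Surjective s) [Module.Projective R Q] : Nonempty (X ≃ₗ[R] M × Q) :=
  let ⟨l, hl⟩ := Module.projective_lifting_property s .id hs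
  ⟨(h.splitSurjectiveEquiv hi ⟨l, hl⟩).1⟩

theorem exact_inclusion_ker_fst_comp (φ : X →ₗ[R] M × Q) :
    Function.Exact (Submodule.inclusion (ker_le_ker_comp φ (fst R M Q)))
      (snd R M Q ∘ₗ φ ∘ₗ (ker (fst R M Q ∘ₗ φ)).subtype) := by
  rintro ⟨x, hx : (φ x).1 = 0⟩
  constructor
  · intro h
    exact ⟨⟨x, Prod.ext hx h⟩, rfl⟩
  · rintro ⟨⟨y, hy⟩, hyx⟩
    obtain rfl : y = x := congrArg Subtype.val hyx
    simp [mem_ker.mp hy]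

theorem nonempty_ker_fst_comp_equiv [Module.Projective R Q] {φ : X →ₗ[R] M × Q}
    (hφ : Function.Surjective φ) : Nonempty (ker (fst R M Q ∘ₗ φ) ≃ₗ[R] ker φ × Q) := by
  refine (exact_inclusion_ker_fst_comp φ).nonempty_linearEquiv_prod_of_projective
    (Submodule.inclusion_injective _) fun q => ?_
  obtain ⟨x, hx⟩ := hφ (0, q)
  exact ⟨⟨x, by simp [hx]⟩, by simp [hx]⟩

theorem exact_inl_restrict_ker_coprod (f : P →ₗ[R] M) (g : Q →ₗ[R] M) :
    Function.Exact ((inl R P Q).restrict (p := ker f) (q := ker (f.coprod g)) (by simp))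
      (snd R P Q ∘ₗ (ker (f.coprod g)).subtype) := by
  rintro ⟨⟨p, q⟩, hpq⟩
  constructor
  · rintro (rfl : q = 0)
    exact ⟨⟨p, by simpa using hpq⟩, rfl⟩
  · rintro ⟨_, h⟩
    exact (congrArg (fun x => x.1.2) h).symm

theorem nonempty_ker_coprod_equiv [Module.Projective R Q] {f : P →ₗ[R] M}
    (hf : Function.Surjective f) (g : Q →ₗ[R] M) :
    Nonempty (ker (f.coprod g) ≃ₗ[R] ker f × Q) := by
  refine (exact_inl_restrict_ker_coprod f g).nonempty_linearEquiv_prod_of_projective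
    (fun a b h => Subtype.ext (congrArg (fun x => x.1.1) h)) fun q => ?_
  obtain ⟨p, hp⟩ := hf (-g q)
  exact ⟨⟨(p, q), by simp [hp]⟩, rfl⟩

theorem schanuel [Module.Projective R P] [Module.Projective R Q] {f : P →ₗ[R] M}
    {g : Q →ₗ[R] M} (hf : Function.Surjective f) (hg : Function.Surjective g) :
    Nonempty ((ker f × Q) ≃ₗ[R] (ker g × P)) := by
  obtain ⟨e₁⟩ := nonempty_ker_coprod_equiv hf g
  obtain ⟨e₂⟩ := nonempty_ker_coprod_equiv hg f
  have hswap : (ker (f.coprod g)).map (LinearEquiv.prodComm R P Q).toLinearMap =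
      ker (g.coprod f) := by
    ext ⟨q, p⟩
    simp [add_comm]
  exact ⟨e₁.symm ≪≫ₗ (LinearEquiv.prodComm R P Q).ofSubmodules _ _ hswap ≪≫ₗ e₂⟩

theorem pdLE_of_linearEquiv (e : M ≃ₗ[R] N) :
    ∀ {n : ℕ}, pdLE R n (.of R M) → pdLE R n (.of R N)
  | 0, (_ : Module.Projective R M) => Module.Projective.of_equiv e
  | _ + 1, ⟨P, f, hP, hf, hk⟩ =>
    ⟨P, e.toLinearMap ∘ₗ f, hP, e.surjective.comp hf, by rwa [LinearEquiv.ker_comp]⟩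

theorem pdLE_prod_of_projective [Module.Projective R Q] {n : ℕ}
    (h : pdLE R n (.of R M)) : pdLE R n (.of R (M × Q)) := by
  cases n with
  | zero =>
    have : Module.Projective R M := h
    exact (inferInstance : Module.Projective R (M × Q))
  | succ n =>
    obtain ⟨P, f, hP, hf, hk⟩ := h
    have : Module.Projective R P := hP
    have hker : ker (f.prodMap (LinearMap.id : Q →ₗ[R] Q)) = (ker f).map (inl R P Q) := by
      rw [ker_prodMap, ker_id, Submodule.map_inl]
    exact ⟨.of R (P × Q), f.prodMap .id, (inferInstance : Module.Projective R (P × Q)),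
      hf.prodMap Function.surjective_id, pdLE_of_linearEquiv
        ((Submodule.equivMapOfInjective _ inl_injective _).trans (.ofEq _ _ hker.symm)) hk⟩

theorem pdLE_of_prod_projective [Module.Projective R Q] {n : ℕ}
    (h : pdLE R n (.of R (M × Q))) : pdLE R n (.of R M) := by
  cases n with
  | zero =>
    have : Module.Projective R (M × Q) := h
    exact .of_split (inl R M Q) (fst R M Q) (fst_comp_inl R M Q)
  | succ n =>
    obtain ⟨P, φ, hP, hφ, hk⟩ := h
    obtain ⟨e⟩ := nonempty_ker_fst_comp_equiv hφ
    exact ⟨P, fst R M Q ∘ₗ φ, hP, Prod.fst_surjective.comp hφ,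
      pdLE_of_linearEquiv e.symm (pdLE_prod_of_projective hk)⟩

theorem pdLE_ker_of_surjective [Module.Projective R P] {f : P →ₗ[R] M}
    (hf : Function.Surjective f) {n : ℕ} (h : pdLE R (n + 1) (.of R M)) :
    pdLE R n (.of R (ker f)) := by
  obtain ⟨Q, g, hQ, hg, hk⟩ := h
  obtain ⟨e⟩ := schanuel hf hg
  exact pdLE_of_prod_projective (Q := Q) (pdLE_of_linearEquiv e.symm (pdLE_prod_of_projective hk))

end DimensionShifting

theorem image_projective_of_regular_general (R : Type u) [CommRing R]
    (hreg : ∀ M : ModuleCat.{u} R, ∃ n : ℕ, pdLE R n M)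
    (D : Type u) [AddCommGroup D] [Module R D] (hproj : Module.Projective R D)
    (δ : D →ₗ[R] D)
    (hacyclic : LinearMap.ker δ = LinearMap.range δ) :
    Module.Projective R (LinearMap.range δ) := by
  obtain ⟨n, hn⟩ := hreg (.of R (range δ))
  induction n with
  | zero => exact hn
  | succ n ih =>
    have hsyzygy := pdLE_ker_of_surjective (P := D) δ.surjective_rangeRestrict hn
    rw [ker_rangeRestrict, hacyclic] at hsyzygy
    exact ih hsyzygy

/-- If every `R`-module has finite projective dimension (`R` is "regular") and `D`
is an acyclic differential `R`-module with projective underlying module, then the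
image of the differentiation is projective. -/
theorem image_projective_of_regular (R : Type u) [CommRing R]
    (hreg : ∀ M : ModuleCat.{u} R, ∃ n : ℕ, pdLE R n M)
    (D : Type u) [AddCommGroup D] [Module R D] (hproj : Module.Projective R D)
    (δ : D →ₗ[R] D) (hsq : δ ∘ₗ δ = 0)
    (hacyclic : LinearMap.ker δ = LinearMap.range δ) :
    Module.Projective R (LinearMap.range δ) :=
  image_projective_of_regular_general R hreg D hproj δ hacyclic
end

section
/- Let R be a unique factorization domain and let A = [[x₁, ..., xₙ],[y₁, ..., yₙ]] be a 2×n matrix over R with all 2×2 minors zero and A ≠ 0. Then there exist elements p, q ∈ R and a 1×n matrix [y₁', ..., yₙ'] over R such that A = [[q],[p]]·[y₁' ⋯ yₙ'], i.e. xⱼ = q·yⱼ' and yⱼ = p·yⱼ' for all j. -/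
/-! If `x k ≠ 0`, write `(x k, y k) = d • (q, p)` with `q, p` coprime. The vanishing minors
`x k * y j = x j * y k` give `q * y j = p * x j`, so `q ∣ x j` by coprimality, and
`(x, y) = (q, p) • (x / q)`. -/

section

variable {α ι : Type*} [CommMonoidWithZero α]

theorem exists_eq_mul_of_isRelPrime_of_mul_eq_mul [IsLeftCancelMulZero α] [DecompositionMonoid α]
    {p q : α} (hq : q ≠ 0) (hqp : IsRelPrime q p) {x y : ι → α} (h : ∀ j, q * y j = p * x j) :
    ∃ z : ι → α, (∀ j, x j = q * z j) ∧ ∀ j, y j = p * z j := by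
  choose z hz using fun j => hqp.dvd_of_dvd_mul_left ⟨y j, (h j).symm⟩
  refine ⟨z, hz, fun j => mul_left_cancel₀ hq ?_⟩
  rw [h j, hz j, mul_left_comm]

variable [GCDMonoid α]

theorem exists_isRelPrime_mul_eq_mul_of_minors_eq_zero {x y : ι → α}
    (hminors : ∀ i j, x i * y j = x j * y i) {k : ι} (hk : x k ≠ 0) :
    ∃ p q : α, q ≠ 0 ∧ IsRelPrime q p ∧ ∀ j, q * y j = p * x j := by
  obtain ⟨q, p, hxk, hyk, hunit⟩ := extract_gcd (x k) (y k)
  generalize gcd (x k) (y k) = d at hxk hyk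
  have hd : d ≠ 0 := fun h => hk (by rw [hxk, h, zero_mul])
  refine ⟨p, q, right_ne_zero_of_mul (hxk ▸ hk), gcd_isUnit_iff_isRelPrime.mp hunit,
    fun j => mul_left_cancel₀ hd ?_⟩
  have := hminors k j
  rw [hxk, hyk] at this
  rw [← mul_assoc, this, mul_comm (x j), mul_assoc]

theorem exists_col_mul_row_of_minors_eq_zero {x y : ι → α}
    (hminors : ∀ i j, x i * y j = x j * y i) :
    ∃ (p q : α) (z : ι → α), (∀ j, x j = q * z j) ∧ ∀ j, y j = p * z j := by
  by_cases hx : x = 0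
  · exact ⟨1, 0, y, fun j => by simp [hx], fun j => (one_mul _).symm⟩
  obtain ⟨k, hk⟩ := Function.ne_iff.mp hx
  obtain ⟨p, q, hq, hqp, h⟩ := exists_isRelPrime_mul_eq_mul_of_minors_eq_zero hminors hk
  exact ⟨p, q, exists_eq_mul_of_isRelPrime_of_mul_eq_mul hq hqp h⟩

end

theorem two_by_n_inner_rank_one_general (R : Type*) [CommRing R] [IsDomain R]
    [UniqueFactorizationMonoid R] (n : ℕ) (x y : Fin n → R)
    (hminors : ∀ i j, x i * y j = x j * y i) :
    ∃ (p q : R) (y' : Fin n → R),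
      (∀ j, x j = q * y' j) ∧ (∀ j, y j = p * y' j) :=
  letI := UniqueFactorizationMonoid.toGCDMonoid R
  exists_col_mul_row_of_minors_eq_zero hminors

/-- Over a UFD, a nonzero `2 × n` matrix with all `2 × 2` minors zero factors as a
column times a row. -/
theorem two_by_n_inner_rank_one (R : Type*) [CommRing R] [IsDomain R]
    [UniqueFactorizationMonoid R] (n : ℕ) (x y : Fin n → R)
    (hminors : ∀ i j, x i * y j = x j * y i) (hne : x ≠ 0 ∨ y ≠ 0) :
    ∃ (p q : R) (y' : Fin n → R),
      (∀ j, x j = q * y' j) ∧ (∀ j, y j = p * y' j) :=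
  two_by_n_inner_rank_one_general R n x y hminors
end

section
/- Let R be a unique factorization domain and A an m×n matrix over R such that all 2×2 minors of A vanish. Then A has inner rank at most 1: there exist a column vector A' ∈ Rᵐ and a row vector A'' ∈ Rⁿ with A = A'·A''. -/
/-!
Pick a nonzero entry `a = A i₀ j₀` and let `g` be the gcd of row `i₀`, so that row `i₀` is
`g • v`. The vanishing minors give `a ∣ A i j₀ * A i₀ j` for all `j`, hence `a ∣ A i j₀ * g`,
say `A i j₀ * g = a * u i`. Then `a * g * A i j = g * A i₀ j * A i j₀ = a * g * u i * v j`,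
and `a * g ≠ 0` can be cancelled.
-/

theorem Finset.dvd_mul_gcd_of_forall_dvd_mul {α β : Type*} [CommMonoidWithZero α]
    [NormalizedGCDMonoid α] {s : Finset β} {f : β → α} {a b : α}
    (h : ∀ j ∈ s, a ∣ b * f j) : a ∣ b * s.gcd f :=
  (Finset.dvd_gcd h).trans (Finset.gcd_mul_left' s f b).dvd

namespace Matrix

variable {ι κ R : Type*} [Fintype κ] [CommRing R] [IsDomain R] [NormalizedGCDMonoid R]

theorem exists_apply_eq_mul_of_minors_vanish_of_ne_zero (A : Matrix ι κ R)
    (hA : ∀ i k j l, A i j * A k l = A i l * A k j) {i₀ : ι} {j₀ : κ} (ha : A i₀ j₀ ≠ 0) :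
    ∃ (u : ι → R) (v : κ → R), ∀ i j, A i j = u i * v j := by
  set g := Finset.univ.gcd (A i₀)
  have hg : g ≠ 0 := fun h ↦ ha (Finset.gcd_eq_zero_iff.mp h j₀ (Finset.mem_univ _))
  have hrow : ∀ j, g ∣ A i₀ j := fun j ↦ Finset.gcd_dvd (Finset.mem_univ j)
  have hcol : ∀ i, A i₀ j₀ ∣ A i j₀ * g := fun i ↦
    Finset.dvd_mul_gcd_of_forall_dvd_mul fun j _ ↦ ⟨A i j, by linear_combination -hA i₀ i j₀ j⟩
  choose v hv using hrow
  choose u hu using hcol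
  refine ⟨u, v, fun i j ↦ mul_left_cancel₀ (mul_ne_zero ha hg) ?_⟩
  linear_combination g * hA i₀ i j₀ j + A i₀ j * hu i + A i₀ j₀ * u i * hv j

theorem exists_apply_eq_mul_of_minors_vanish (A : Matrix ι κ R)
    (hA : ∀ i k j l, A i j * A k l = A i l * A k j) :
    ∃ (u : ι → R) (v : κ → R), ∀ i j, A i j = u i * v j := by
  rcases eq_or_ne A 0 with rfl | hA₀
  · exact ⟨0, 0, by simp⟩
  obtain ⟨i₀, j₀, ha⟩ : ∃ i j, A i j ≠ 0 := by
    by_contra! h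
    exact hA₀ (Matrix.ext h)
  exact A.exists_apply_eq_mul_of_minors_vanish_of_ne_zero hA ha

end Matrix

/-- Over a UFD, a matrix all of whose `2 × 2` minors vanish has inner rank at
most `1`: it factors as a column vector times a row vector. -/
theorem inner_rank_le_one_of_minors_vanish (R : Type*) [CommRing R] [IsDomain R]
    [UniqueFactorizationMonoid R] (m n : ℕ) (A : Matrix (Fin m) (Fin n) R)
    (hminors : ∀ i k j l, A i j * A k l = A i l * A k j) :
    ∃ (u : Fin m → R) (v : Fin n → R), ∀ i j, A i j = u i * v j := by
  let := UniqueFactorizationMonoid.strongNormalizationMonoid (α := R)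
  let := UniqueFactorizationMonoid.toNormalizedGCDMonoid R
  exact A.exists_apply_eq_mul_of_minors_vanish hminors
end

section
/- Let R be an integral domain in which every nonempty set of principal ideals has a maximal element, and suppose every 2×2 matrix over R with zero determinant factors as a product of a 2×1 matrix and a 1×2 matrix. Then for all a, b ∈ R, the ideal (a) ∩ (b) is principal, and hence R is a unique factorization domain. -/
/-- A domain in which every nonempty family of principal ideals has a maximal
element and every `2 × 2` matrix of zero determinant factors through a column
and a row has principal pairwise intersections of principal ideals, and is a
unique factorization domain. -/
theorem ufd_of_matrix_factorization (R : Type*) [CommRing R] [IsDomain R]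
    (hmax : ∀ S : Set (Ideal R), (∀ I ∈ S, ∃ a : R, I = Ideal.span {a}) →
      S.Nonempty → ∃ I ∈ S, ∀ J ∈ S, I ≤ J → I = J)
    (hfac : ∀ u u' x x' : R, u * x' = u' * x →
      ∃ c d y z : R, u = c * y ∧ u' = c * z ∧ x = d * y ∧ x' = d * z) :
    (∀ a b : R, ∃ g : R, Ideal.span {a} ⊓ Ideal.span {b} = Ideal.span {g}) ∧
    UniqueFactorizationMonoid R := by
  -- Part 1: intersections of principal ideals are principal
  have hint : ∀ a b : R, ∃ g : R, Ideal.span {a} ⊓ Ideal.span {b} = Ideal.span {g} := by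
    intro a b
    rcases eq_or_ne a 0 with rfl | ha
    · exact ⟨0, by ext x; simp only [Ideal.mem_inf, Ideal.mem_span_singleton, zero_dvd_iff]; aesop⟩
    rcases eq_or_ne b 0 with rfl | hb
    · exact ⟨0, by ext x; simp only [Ideal.mem_inf, Ideal.mem_span_singleton, zero_dvd_iff]; aesop⟩
    set S : Set (Ideal R) :=
      {I | (∃ m : R, I = Ideal.span {m}) ∧ I ≤ Ideal.span {a} ⊓ Ideal.span {b}} with hS
    obtain ⟨I, ⟨⟨m, rfl⟩, hIle⟩, hImax⟩ := hmax S (fun I hI => hI.1)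
      ⟨Ideal.span {a * b}, ⟨a * b, rfl⟩, le_inf
        (Ideal.span_singleton_le_span_singleton.mpr ⟨b, rfl⟩)
        (Ideal.span_singleton_le_span_singleton.mpr ⟨a, mul_comm a b⟩)⟩
    refine ⟨m, le_antisymm (fun t ht => ?_) hIle⟩
    have hm : m ≠ 0 := by
      rintro rfl
      have := hImax (Ideal.span {a * b}) ⟨⟨a * b, rfl⟩, le_inf
        (Ideal.span_singleton_le_span_singleton.mpr ⟨b, rfl⟩)
        (Ideal.span_singleton_le_span_singleton.mpr ⟨a, mul_comm a b⟩)⟩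
        (by simp [Ideal.span_le])
      have h0 : (a * b : R) ∈ Ideal.span ({(0:R)} : Set R) := by
        rw [this]; exact Ideal.mem_span_singleton_self _
      rw [Ideal.mem_span_singleton] at h0
      exact mul_ne_zero ha hb (zero_dvd_iff.mp h0)
    obtain ⟨α, hα⟩ := Ideal.mem_span_singleton.mp (hIle.trans inf_le_left (Ideal.mem_span_singleton_self m))
    obtain ⟨β, hβ⟩ := Ideal.mem_span_singleton.mp (hIle.trans inf_le_right (Ideal.mem_span_singleton_self m))
    obtain ⟨γ, hγ⟩ := Ideal.mem_span_singleton.mp (Ideal.mem_inf.mp ht).1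
    obtain ⟨δ, hδ⟩ := Ideal.mem_span_singleton.mp (Ideal.mem_inf.mp ht).2
    have hdet : α * δ = γ * β := by
      have h1 : (a * b) * (α * δ) = (a * b) * (γ * β) := by
        have h2 : (a * α) * (b * δ) = (a * γ) * (b * β) := by
          rw [← hα, ← hβ, ← hγ, ← hδ, mul_comm]
        linear_combination h2
      exact mul_left_cancel₀ (mul_ne_zero ha hb) h1
    obtain ⟨c, d, y, z, h1, h2, h3, h4⟩ := hfac α γ β δ hdet
    -- m = a*c*y = b*d*y, t = a*c*z = b*d*z
    have hy : y ≠ 0 := by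
      rintro rfl
      exact hm (by rw [hα, h1, mul_zero, mul_zero])
    have hacbd : a * c = b * d := by
      have : (a * c) * y = (b * d) * y := by
        have := hα; rw [h1] at this
        have h' := hβ; rw [h3] at h'
        rw [← mul_assoc] at this h'
        rw [← this, ← h']
      exact mul_right_cancel₀ hy this
    have hnS : Ideal.span {a * c} ∈ S := by
      refine ⟨⟨a * c, rfl⟩, le_inf ?_ ?_⟩
      · exact Ideal.span_singleton_le_span_singleton.mpr ⟨c, rfl⟩
      · exact Ideal.span_singleton_le_span_singleton.mpr ⟨d, hacbd⟩
    have hle : Ideal.span ({m} : Set R) ≤ Ideal.span {a * c} :=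
      Ideal.span_singleton_le_span_singleton.mpr ⟨y, by rw [hα, h1, mul_assoc]⟩
    have heq := hImax (Ideal.span {a * c}) hnS hle
    rw [heq]
    exact Ideal.mem_span_singleton.mpr ⟨z, by rw [hγ, h2, mul_assoc]⟩
  refine ⟨hint, ?_⟩
  -- WfDvdMonoid
  have hwf : WellFounded (DvdNotUnit : R → R → Prop) := by
    rw [WellFounded.wellFounded_iff_has_min]
    intro s hs
    obtain ⟨x, hx⟩ := hs
    obtain ⟨I, hIS, hImax⟩ := hmax ((fun r => Ideal.span {r}) '' s)
      (by rintro _ ⟨r, _, rfl⟩; exact ⟨r, rfl⟩) ⟨_, x, hx, rfl⟩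
    obtain ⟨m, hms, rfl⟩ := hIS
    refine ⟨m, hms, fun x hxs hxm => ?_⟩
    have hlt : Ideal.span ({m} : Set R) < Ideal.span {x} :=
      Ideal.span_singleton_lt_span_singleton.mpr hxm
    exact hlt.ne (hImax _ ⟨x, hxs, rfl⟩ hlt.le)
  have hwfd : WfDvdMonoid R := ⟨hwf⟩
  -- irreducible implies prime
  refine { wf := hwf, irreducible_iff_prime := fun {p} => ⟨fun hp => ?_, Prime.irreducible⟩ }
  refine ⟨hp.ne_zero, hp.not_isUnit, fun a b hab => ?_⟩
  by_cases hpa : p ∣ a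
  · exact Or.inl hpa
  · right
    obtain ⟨l, hl⟩ := hint p a
    have hpl : p * a ∈ Ideal.span ({l} : Set R) := by
      rw [← hl]
      exact Ideal.mem_inf.mpr ⟨Ideal.mem_span_singleton.mpr ⟨a, rfl⟩,
        Ideal.mem_span_singleton.mpr ⟨p, mul_comm p a⟩⟩
    obtain ⟨k, hk⟩ := Ideal.mem_span_singleton.mp hpl
    have ha0 : a ≠ 0 := fun h => hpa (h ▸ dvd_zero p)
    have hlmem : l ∈ Ideal.span ({p} : Set R) ⊓ Ideal.span {a} := by
      rw [hl]; exact Ideal.mem_span_singleton_self l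
    obtain ⟨m, hmm⟩ := Ideal.mem_span_singleton.mp (Ideal.mem_inf.mp hlmem).1
    obtain ⟨n, hnn⟩ := Ideal.mem_span_singleton.mp (Ideal.mem_inf.mp hlmem).2
    have hpnk : p = n * k := by
      refine mul_left_cancel₀ ha0 ?_
      rw [mul_comm a p, hk, hnn]; ring
    rcases hp.isUnit_or_isUnit hpnk with hn | hku
    · exfalso
      obtain ⟨u, rfl⟩ := hn
      have hamk : a = m * k := by
        refine mul_left_cancel₀ hp.ne_zero ?_
        rw [hk, hmm]; ring
      have hkval : k = (↑u⁻¹ : R) * p := by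
        rw [hpnk]; rw [← mul_assoc]; simp
      exact hpa ⟨m * ↑u⁻¹, by rw [hamk, hkval]; ring⟩
    · obtain ⟨u, rfl⟩ := hku
      have habl : a * b ∈ Ideal.span ({l} : Set R) := by
        rw [← hl]
        exact Ideal.mem_inf.mpr ⟨Ideal.mem_span_singleton.mpr (hab),
          Ideal.mem_span_singleton.mpr ⟨b, rfl⟩⟩
      obtain ⟨w, hw⟩ := Ideal.mem_span_singleton.mp habl
      have hb : b = n * w := by
        refine mul_left_cancel₀ ha0 ?_
        rw [hw, hnn]; ring
      have hnval : n = p * ↑u⁻¹ := by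
        rw [hpnk]; rw [mul_assoc]; simp
      exact ⟨↑u⁻¹ * w, by rw [hb, hnval]; ring⟩
end

section
/- Let R be a commutative noetherian UFD and A an m×n matrix over R with determinantal rank exactly 1 (some entry is nonzero and all 2×2 minors vanish). Then either the ideal I₁(A) generated by the entries of A equals R, or height I₁(A) ≤ max{m, n}. -/
/-!
Over a GCD monoid a matrix with vanishing `2 × 2` minors factors as `A = b cᵀ`: dividing a nonzero
column by the gcd of its entries gives `b` with coprime entries, and the minor relations
`b i * A k j = A i j * b k` then force `b i ∣ A i j`. Hence `I₁(A) = (b) * (c)`. If both factors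
are the unit ideal, so is `I₁(A)`; otherwise the proper one contains `I₁(A)` and is generated by
`m` (resp. `n`) elements, so by Krull's height theorem a minimal prime over it has height at most
`max m n`.
-/

open Set

theorem Finset.dvd_of_forall_dvd_mul_of_gcd_eq_one {ι α : Type*} [CommMonoidWithZero α]
    [NormalizedGCDMonoid α] {s : Finset ι} {f : ι → α} (hf : s.gcd f = 1) {x a : α}
    (h : ∀ i ∈ s, x ∣ a * f i) : x ∣ a := by
  have := (Finset.dvd_gcd h).trans (s.gcd_mul_left' f a).dvd
  rwa [hf, mul_one] at this

theorem Matrix.exists_eq_vecMulVec_of_mul_eq_mul {m n α : Type*} [Fintype m]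
    [CommMonoidWithZero α] [NormalizedGCDMonoid α] (A : Matrix m n α)
    (hminors : ∀ i k j l, A i j * A k l = A i l * A k j) :
    ∃ (b : m → α) (c : n → α), A = vecMulVec b c := by
  by_cases hA : A = 0
  · exact ⟨0, 0, by ext; simp [hA]⟩
  obtain ⟨i₀, j₀, hA₀⟩ : ∃ i j, A i j ≠ 0 := by
    by_contra! h
    exact hA (Matrix.ext h)
  obtain ⟨b, hb, hb_gcd⟩ := Finset.extract_gcd (fun i => A i j₀) ⟨i₀, Finset.mem_univ _⟩
  set d := Finset.univ.gcd fun i => A i j₀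
  have hd : d ≠ 0 := fun h => hA₀ (Finset.gcd_eq_zero_iff.mp h i₀ (Finset.mem_univ _))
  have hcross : ∀ i k j, b i * A k j = A i j * b k := fun i k j => by
    apply mul_left_cancel₀ hd
    calc d * (b i * A k j) = A i j₀ * A k j := by rw [hb i (Finset.mem_univ _), mul_assoc]
      _ = A i j * A k j₀ := hminors i k j₀ j
      _ = d * (A i j * b k) := by rw [hb k (Finset.mem_univ _), mul_left_comm]
  have hb₀ : b i₀ ≠ 0 := by
    intro h
    exact hA₀ (by rw [hb i₀ (Finset.mem_univ _), h, mul_zero])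
  choose c hc using fun j => Finset.dvd_of_forall_dvd_mul_of_gcd_eq_one hb_gcd
    fun k _ => ⟨A k j, (hcross i₀ k j).symm⟩
  refine ⟨b, c, Matrix.ext fun i j => mul_left_cancel₀ hb₀ ?_⟩
  calc b i₀ * A i j = A i₀ j * b i := hcross i₀ i j
    _ = b i₀ * vecMulVec b c i j := by rw [hc j, vecMulVec_apply]; ac_rfl

theorem Ideal.span_range_mul_eq_mul_span_range {R ι κ : Type*} [CommSemiring R]
    (b : ι → R) (c : κ → R) :
    Ideal.span (range fun p : ι × κ => b p.1 * c p.2) =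
      Ideal.span (range b) * Ideal.span (range c) := by
  rw [Ideal.span_mul_span']
  congr 1
  ext x
  simp [mem_mul]

theorem Ideal.exists_le_height_le_card_of_span_range_ne_top {R ι : Type*} [CommRing R]
    [IsNoetherianRing R] [Fintype ι] (b : ι → R) (h : Ideal.span (range b) ≠ ⊤) :
    ∃ p : PrimeSpectrum R, Ideal.span (range b) ≤ p.asIdeal ∧
      Order.height p ≤ Fintype.card ι := by
  classical
  obtain ⟨q, hq⟩ := Ideal.nonempty_minimalPrimes h
  refine ⟨⟨q, hq.1.1⟩, hq.1.2, ?_⟩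
  rw [← PrimeSpectrum.height_eq_orderHeight]
  have hq' : q ∈ (Ideal.span ((Finset.univ.image b : Finset R) : Set R)).minimalPrimes := by
    simpa using hq
  exact (Ideal.height_le_card_of_mem_minimalPrimes_span_finset hq').trans
    (by exact_mod_cast Finset.card_image_le)

theorem height_of_entries_ideal_general (R : Type*) [CommRing R]
    [IsNoetherianRing R] [UniqueFactorizationMonoid R] (m n : ℕ)
    (A : Matrix (Fin m) (Fin n) R)
    (hminors : ∀ i k j l, A i j * A k l = A i l * A k j) :
    Ideal.span (Set.range fun p : Fin m × Fin n => A p.1 p.2) = ⊤ ∨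
    ∃ p : PrimeSpectrum R,
      Ideal.span (Set.range fun p : Fin m × Fin n => A p.1 p.2) ≤ p.asIdeal ∧
      Order.height p ≤ (max m n : ℕ∞) := by
  let := UniqueFactorizationMonoid.strongNormalizationMonoid (α := R)
  let := UniqueFactorizationMonoid.toNormalizedGCDMonoid R
  obtain ⟨b, c, rfl⟩ := Matrix.exists_eq_vecMulVec_of_mul_eq_mul A hminors
  simp only [Matrix.vecMulVec_apply, Ideal.span_range_mul_eq_mul_span_range]
  by_cases hb : Ideal.span (range b) = ⊤
  · by_cases hc : Ideal.span (range c) = ⊤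
    · simp [hb, hc]
    · obtain ⟨p, hcp, hp⟩ := Ideal.exists_le_height_le_card_of_span_range_ne_top c hc
      exact .inr ⟨p, Ideal.mul_le_right.trans hcp, hp.trans (by simp)⟩
  · obtain ⟨p, hbp, hp⟩ := Ideal.exists_le_height_le_card_of_span_range_ne_top b hb
    exact .inr ⟨p, Ideal.mul_le_left.trans hbp, hp.trans (by simp)⟩

/-- Over a noetherian UFD, if `A ≠ 0` and all `2 × 2` minors of `A` vanish, then
the ideal `I₁(A)` generated by the entries of `A` is either the whole ring or has
height at most `max m n` (a prime containing it of height at most `max m n`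
exists). -/
theorem height_of_entries_ideal (R : Type*) [CommRing R] [IsDomain R]
    [IsNoetherianRing R] [UniqueFactorizationMonoid R] (m n : ℕ)
    (A : Matrix (Fin m) (Fin n) R) (hne : A ≠ 0)
    (hminors : ∀ i k j l, A i j * A k l = A i l * A k j) :
    Ideal.span (Set.range fun p : Fin m × Fin n => A p.1 p.2) = ⊤ ∨
    ∃ p : PrimeSpectrum R,
      Ideal.span (Set.range fun p : Fin m × Fin n => A p.1 p.2) ≤ p.asIdeal ∧
      Order.height p ≤ (max m n : ℕ∞) :=
  height_of_entries_ideal_general R m n A hminors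
end
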